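/- For any module M ∈ mod A, the subcategory Filt(Fac M) is a torsion class in mod A, and it is the minimal torsion class containing M: every torsion class containing M contains Filt(Fac M). -/

import Mathlib

/-!
Common definitions: stability conditions, wall-and-chamber structures, and τ-tilting theory
for a finite-dimensional algebra `A` over a field `K`.
Modules are (left) `A`-modules; `mod A` is the class of finitely generated ones.
-/

set_option linter.unusedSectionVars false

universe u

open Module MulOpposite

namespace WCS

variable (K : Type u) [Field K] (A : Type u) [Ring A] [Algebra K A]

/-! ### Dimension vectors and stability -/

section Stability

/-- The subquotient `s j.succ / s j.castSucc` of a chain of submodules. -/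
abbrev factorAt {M : Type u} [AddCommGroup M] [Module A M]
    {t : ℕ} (s : Fin (t + 1) → Submodule A M) (j : Fin t) : Type u :=
  ↥(s j.succ) ⧸ Submodule.comap (s j.succ).subtype (s j.castSucc)

/-- `s` is a composition series of `M`: a chain from `⊥` to `⊤` all of whose
subquotients are simple. -/
def IsCompSeries {M : Type u} [AddCommGroup M] [Module A M] (t : ℕ)
    (s : Fin (t + 1) → Submodule A M) : Prop :=
  s 0 = ⊥ ∧ s (Fin.last t) = ⊤ ∧ (∀ j : Fin t, s j.castSucc ≤ s j.succ) ∧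
    ∀ j : Fin t, IsSimpleModule A (factorAt A s j)

open Classical in
/-- The multiplicity of the simple module `S` among the composition factors of `M`
(computed from a choice of composition series; by the Jordan–Hölder theorem this is
independent of the choice). -/
noncomputable def mult (S : Type u) [AddCommGroup S] [Module A S]
    (M : Type u) [AddCommGroup M] [Module A M] : ℕ :=
  if h : ∃ (t : ℕ) (s : Fin (t + 1) → Submodule A M), IsCompSeries A t s then
    Nat.card {j : Fin h.choose // Nonempty (factorAt A h.choose_spec.choose j ≃ₗ[A] S)}
  else 0

variable {n : ℕ} (S : Fin n → Type u) [∀ i, AddCommGroup (S i)] [∀ i, Module A (S i)]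
  [∀ i, Module K (S i)] [∀ i, SMulCommClass A K (S i)]

/-- `S : Fin n → Type u` is a complete irredundant list of the simple `A`-modules. -/
def SimpleParam : Prop :=
  (∀ i, IsSimpleModule A (S i)) ∧
    (∀ i j, Nonempty (S i ≃ₗ[A] S j) → i = j) ∧
    ∀ (M : Type u) [AddCommGroup M] [Module A M], IsSimpleModule A M →
      ∃ i, Nonempty (M ≃ₗ[A] S i)

/-- The pairing `⟨v, dim M⟩ = vᵀ D_A (dim M)`, where `dim M` is the dimension vector of `M`
(multiplicities of the simples as composition factors) and
`D_A = diag (dim_K End (S 1), …, dim_K End (S n))`. -/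
noncomputable def pairing (v : Fin n → ℝ) (M : Type u) [AddCommGroup M] [Module A M] : ℝ :=
  ∑ i, v i * (Module.finrank K (S i →ₗ[A] S i) : ℝ) * (mult A (S i) M : ℝ)

/-- `M` is `v`-semistable: `⟨v, dim M⟩ = 0` and `⟨v, dim L⟩ ≤ 0` for every submodule `L ≤ M`. -/
def IsSemistable (v : Fin n → ℝ) (M : Type u) [AddCommGroup M] [Module A M] : Prop :=
  pairing K A S v M = 0 ∧ ∀ L : Submodule A M, pairing K A S v ↥L ≤ 0

/-- `M` is `v`-stable: `⟨v, dim M⟩ = 0` and `⟨v, dim L⟩ < 0` for every nonzero proper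
submodule `L` of `M`. -/
def IsStable (v : Fin n → ℝ) (M : Type u) [AddCommGroup M] [Module A M] : Prop :=
  pairing K A S v M = 0 ∧ ∀ L : Submodule A M, L ≠ ⊥ → L ≠ ⊤ → pairing K A S v ↥L < 0

/-- A filtration of `M` by submodules, from `⊥` to `⊤`, with `v`-stable subquotients. -/
def IsStableFiltration (v : Fin n → ℝ) {M : Type u} [AddCommGroup M] [Module A M]
    (t : ℕ) (s : Fin (t + 1) → Submodule A M) : Prop :=
  s 0 = ⊥ ∧ s (Fin.last t) = ⊤ ∧ StrictMono s ∧
    ∀ j : Fin t, IsStable K A S v (factorAt A s j)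

/-- The stability space `D(M) = {v : M is v-semistable}` of a module `M`. -/
def stabilitySpace (M : Type u) [AddCommGroup M] [Module A M] : Set (Fin n → ℝ) :=
  { v | IsSemistable K A S v M }

/-- The union of all walls: the union of the stability spaces `D(M)` over all nonzero
finitely generated `A`-modules `M`. -/
def wallsUnion : Set (Fin n → ℝ) :=
  { v | ∃ M : ModuleCat.{u} A, Module.Finite A M ∧ Nontrivial M ∧ IsSemistable K A S v M }

end Stability

section Torsion

/-- A pair of full subcategories of `mod A` (given as isomorphism-closed predicates on
modules) is a torsion pair if they are Hom-orthogonal and every finitely generated module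
is an extension of a torsion-free module by a torsion module. -/
def IsTorsionPair (T F : ModuleCat.{u} A → Prop) : Prop :=
  (∀ M N : ModuleCat.{u} A, T M → F N → ∀ f : M →ₗ[A] N, f = 0) ∧
  ∀ M : ModuleCat.{u} A, Module.Finite A M →
    ∃ tM : Submodule A M, T (ModuleCat.of A ↥tM) ∧ F (ModuleCat.of A (M ⧸ tM))

/-- A torsion class in `mod A`: a class of finitely generated modules, closed under
isomorphisms, quotients and extensions. -/
def IsTorsionClass (T : ModuleCat.{u} A → Prop) : Prop :=
  (∀ M : ModuleCat.{u} A, T M → Module.Finite A M) ∧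
  (∀ M N : ModuleCat.{u} A, Nonempty (M ≃ₗ[A] N) → T M → T N) ∧
  (∀ M : ModuleCat.{u} A, T M → ∀ N : Submodule A M, T (ModuleCat.of A (M ⧸ N))) ∧
  ∀ (X Y Z : ModuleCat.{u} A) (f : X →ₗ[A] Y) (g : Y →ₗ[A] Z), Module.Finite A Y →
    Function.Injective f → Function.Surjective g → LinearMap.range f = LinearMap.ker g →
    T X → T Z → T Y

/-- A torsion-free class in `mod A`: a class of finitely generated modules, closed under
isomorphisms, submodules and extensions. -/
def IsTorsionFreeClass (F : ModuleCat.{u} A → Prop) : Prop :=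
  (∀ M : ModuleCat.{u} A, F M → Module.Finite A M) ∧
  (∀ M N : ModuleCat.{u} A, Nonempty (M ≃ₗ[A] N) → F M → F N) ∧
  (∀ M : ModuleCat.{u} A, F M → ∀ N : Submodule A M, F (ModuleCat.of A ↥N)) ∧
  ∀ (X Y Z : ModuleCat.{u} A) (f : X →ₗ[A] Y) (g : Y →ₗ[A] Z), Module.Finite A Y →
    Function.Injective f → Function.Surjective g → LinearMap.range f = LinearMap.ker g →
    F X → F Z → F Y

/-- `M` belongs to `Fac T`: there is an epimorphism `T^k → M` for some `k`. -/
def InFac (T : Type u) [AddCommGroup T] [Module A T]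
    (M : Type u) [AddCommGroup M] [Module A M] : Prop :=
  ∃ (k : ℕ) (f : (Fin k → T) →ₗ[A] M), Function.Surjective f

/-- `M` belongs to `Filt (Fac T)`: `M` has a filtration whose subquotients lie in `Fac T`. -/
def InFiltFac (T : Type u) [AddCommGroup T] [Module A T]
    (M : Type u) [AddCommGroup M] [Module A M] : Prop :=
  ∃ (t : ℕ) (s : Fin (t + 1) → Submodule A M),
    s 0 = ⊥ ∧ s (Fin.last t) = ⊤ ∧ (∀ j : Fin t, s j.castSucc ≤ s j.succ) ∧
      ∀ j : Fin t, InFac A T (factorAt A s j)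

/-- The subcategory `Fac T` of `mod A`. -/
def FacClass (T : Type u) [AddCommGroup T] [Module A T] : ModuleCat.{u} A → Prop :=
  fun M => Module.Finite A M ∧ InFac A T M

/-- `f : X → M` is a right `𝒳`-approximation of `M`. -/
def IsRightApprox (𝒳 : ModuleCat.{u} A → Prop) {X M : ModuleCat.{u} A}
    (f : X →ₗ[A] M) : Prop :=
  𝒳 X ∧ ∀ Y : ModuleCat.{u} A, 𝒳 Y → ∀ g : Y →ₗ[A] M, ∃ h : Y →ₗ[A] X, f.comp h = g

/-- `f : M → X` is a left `𝒳`-approximation of `M`. -/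
def IsLeftApprox (𝒳 : ModuleCat.{u} A → Prop) {X M : ModuleCat.{u} A}
    (f : M →ₗ[A] X) : Prop :=
  𝒳 X ∧ ∀ Y : ModuleCat.{u} A, 𝒳 Y → ∀ g : M →ₗ[A] Y, ∃ h : X →ₗ[A] Y, h.comp f = g

/-- `𝒳` is contravariantly finite in `mod A`. -/
def ContravariantlyFinite (𝒳 : ModuleCat.{u} A → Prop) : Prop :=
  ∀ M : ModuleCat.{u} A, Module.Finite A M →
    ∃ (X : ModuleCat.{u} A) (f : X →ₗ[A] M), IsRightApprox A 𝒳 f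

/-- `𝒳` is covariantly finite in `mod A`. -/
def CovariantlyFinite (𝒳 : ModuleCat.{u} A → Prop) : Prop :=
  ∀ M : ModuleCat.{u} A, Module.Finite A M →
    ∃ (X : ModuleCat.{u} A) (f : M →ₗ[A] X), IsLeftApprox A 𝒳 f

/-- `𝒳` is functorially finite in `mod A`. -/
def FunctoriallyFinite (𝒳 : ModuleCat.{u} A → Prop) : Prop :=
  ContravariantlyFinite A 𝒳 ∧ CovariantlyFinite A 𝒳

end Torsion

section Indec

/-- An `A`-module is indecomposable if it is nonzero and admits no nontrivial direct sum
decomposition. -/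
def IsIndecomposable (M : Type u) [AddCommGroup M] [Module A M] : Prop :=
  Nontrivial M ∧ ∀ L L' : Submodule A M, IsCompl L L' → L = ⊥ ∨ L = ⊤

/-- The setoid identifying isomorphic indecomposable direct summands of `M`. -/
def summandSetoid (M : Type u) [AddCommGroup M] [Module A M] :
    Setoid {N : Submodule A M // (∃ L, IsCompl N L) ∧ IsIndecomposable A ↥N} where
  r N N' := Nonempty (↥N.1 ≃ₗ[A] ↥N'.1)
  iseqv := ⟨fun _ => ⟨LinearEquiv.refl _ _⟩, fun ⟨e⟩ => ⟨e.symm⟩, fun ⟨e⟩ ⟨f⟩ => ⟨e.trans f⟩⟩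

/-- `|M|`: the number of isomorphism classes of indecomposable direct summands of `M`. -/
noncomputable def numIndec (M : Type u) [AddCommGroup M] [Module A M] : ℕ :=
  Nat.card (Quotient (summandSetoid A M))

/-- `M` is basic: no indecomposable module occurs at least twice as a direct summand. -/
def IsBasic (M : Type u) [AddCommGroup M] [Module A M] : Prop :=
  ∀ L L' : Submodule A M, IsCompl L L' →
    ∀ (N : Type u) [AddCommGroup N] [Module A N], IsIndecomposable A N →
      ¬ Nonempty (↥L ≃ₗ[A] (N × N))

end Indec

section Tau

/-- The `K`-linear map given by the action of `op a : Aᵐᵒᵖ` on a right `A`-module `N`. -/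
def actLin (N : Type u) [AddCommGroup N] [Module K N] [Module Aᵐᵒᵖ N]
    [SMulCommClass K Aᵐᵒᵖ N] (a : A) : N →ₗ[K] N where
  toFun x := op a • x
  map_add' _ _ := smul_add _ _ _
  map_smul' k x := (smul_comm k (op a) x).symm

variable {N : Type u} [AddCommGroup N] [Module K N] [Module Aᵐᵒᵖ N] [SMulCommClass K Aᵐᵒᵖ N]

/-- The left `A`-action on the `K`-dual of a right `A`-module (i.e. `Aᵐᵒᵖ`-module):
`(a • φ) x = φ (x · a)`. -/
instance instDualSMul : SMul A (N →ₗ[K] K) := ⟨fun a φ => φ.comp (actLin K A N a)⟩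

theorem dualSMul_apply (a : A) (φ : N →ₗ[K] K) (x : N) : (a • φ) x = φ (op a • x) := rfl

/-- The left `A`-module structure on the `K`-dual `D(N) = Hom_K(N, K)` of a right
`A`-module `N`. -/
instance instDualModule : Module A (N →ₗ[K] K) where
  one_smul φ := by ext x; rw [dualSMul_apply, op_one, one_smul]
  mul_smul a b φ := by
    ext x
    rw [dualSMul_apply, dualSMul_apply, dualSMul_apply, op_mul, mul_smul]
  smul_zero a := by ext x; rw [dualSMul_apply]; rfl
  smul_add a φ ψ := by ext x; rw [dualSMul_apply]; rfl
  add_smul a b φ := by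
    ext x
    rw [dualSMul_apply, op_add, add_smul, map_add]
    rfl
  zero_smul φ := by ext x; rw [dualSMul_apply, op_zero, zero_smul, map_zero]; rfl

instance instDualSMulCommClass : SMulCommClass A K (N →ₗ[K] K) :=
  ⟨fun _ _ _ => by ext _; rfl⟩

variable (M : Type u) [AddCommGroup M] [Module A M]

/-- A projective presentation `P1 → P0 → M → 0` of `M` by finitely generated projectives. -/
structure ProjPres where
  /-- the degree-zero term -/
  P0 : Type u
  /-- the degree-one term -/
  P1 : Type u
  [acg0 : AddCommGroup P0]
  [mod0 : Module A P0]
  [acg1 : AddCommGroup P1]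
  [mod1 : Module A P1]
  proj0 : Module.Projective A P0
  proj1 : Module.Projective A P1
  fin0 : Module.Finite A P0
  fin1 : Module.Finite A P1
  /-- the augmentation `P0 → M` -/
  d0 : P0 →ₗ[A] M
  /-- the differential `P1 → P0` -/
  d1 : P1 →ₗ[A] P0
  surj : Function.Surjective d0
  exact : LinearMap.range d1 = LinearMap.ker d0

attribute [instance] ProjPres.acg0 ProjPres.mod0 ProjPres.acg1 ProjPres.mod1

variable {K A M}

/-- A projective presentation is minimal if both `d0 : P0 → M` and `d1 : P1 → ker d0` are
projective covers, i.e. have superfluous kernels. -/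
def ProjPres.IsMinimal (pres : ProjPres A M) : Prop :=
  (∀ L : Submodule A pres.P0, L ⊔ LinearMap.ker pres.d0 = ⊤ → L = ⊤) ∧
  ∀ L : Submodule A pres.P1, L ⊔ LinearMap.ker pres.d1 = ⊤ → L = ⊤

/-- The map `Hom_A(P0, A) → Hom_A(P1, A)` of right `A`-modules induced by `d1`. -/
def ProjPres.dualD1 (pres : ProjPres A M) :
    (pres.P0 →ₗ[A] A) →ₗ[Aᵐᵒᵖ] (pres.P1 →ₗ[A] A) where
  toFun f := f.comp pres.d1
  map_add' _ _ := rfl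
  map_smul' _ _ := rfl

/-- The transpose `Tr M = coker (Hom_A(P0,A) → Hom_A(P1,A))`, a right `A`-module. -/
def ProjPres.Tr (pres : ProjPres A M) : Type u :=
  (pres.P1 →ₗ[A] A) ⧸ LinearMap.range pres.dualD1

noncomputable instance (pres : ProjPres A M) : AddCommGroup pres.Tr :=
  inferInstanceAs (AddCommGroup ((pres.P1 →ₗ[A] A) ⧸ LinearMap.range pres.dualD1))

noncomputable instance (pres : ProjPres A M) : Module Aᵐᵒᵖ pres.Tr :=
  inferInstanceAs (Module Aᵐᵒᵖ ((pres.P1 →ₗ[A] A) ⧸ LinearMap.range pres.dualD1))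

noncomputable instance (pres : ProjPres A M) : Module K pres.Tr :=
  inferInstanceAs (Module K ((pres.P1 →ₗ[A] A) ⧸ LinearMap.range pres.dualD1))

noncomputable instance (pres : ProjPres A M) : SMulCommClass K Aᵐᵒᵖ pres.Tr :=
  inferInstanceAs (SMulCommClass K Aᵐᵒᵖ
    ((pres.P1 →ₗ[A] A) ⧸ LinearMap.range pres.dualD1))

variable (K) in
/-- The Auslander–Reiten translate `τ M = D (Tr M)` computed from a projective
presentation of `M`; it is a left `A`-module via the dual module structure. -/
def ProjPres.tau (pres : ProjPres A M) : Type u := pres.Tr →ₗ[K] K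

noncomputable instance (pres : ProjPres A M) : AddCommGroup (pres.tau K) :=
  inferInstanceAs (AddCommGroup (pres.Tr →ₗ[K] K))

noncomputable instance (pres : ProjPres A M) : Module A (pres.tau K) :=
  inferInstanceAs (Module A (pres.Tr →ₗ[K] K))

noncomputable instance (pres : ProjPres A M) : Module K (pres.tau K) :=
  inferInstanceAs (Module K (pres.Tr →ₗ[K] K))

noncomputable instance (pres : ProjPres A M) : SMulCommClass A K (pres.tau K) :=
  inferInstanceAs (SMulCommClass A K (pres.Tr →ₗ[K] K))

variable (K A)

/-- `T` is τ-rigid: `Hom_A(T, τT) = 0`, where `τT` is computed from any minimal projective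
presentation of `T`. -/
def IsTauRigid (T : Type u) [AddCommGroup T] [Module A T] : Prop :=
  ∀ pres : ProjPres A T, pres.IsMinimal → ∀ f : T →ₗ[A] pres.tau K, f = 0

/-- `(T, P)` is a τ-rigid pair: `P` is projective, `T` is τ-rigid and `Hom_A(P, T) = 0`. -/
def IsTauRigidPair (T P : Type u) [AddCommGroup T] [Module A T]
    [AddCommGroup P] [Module A P] : Prop :=
  Module.Projective A P ∧ IsTauRigid K A T ∧ ∀ f : P →ₗ[A] T, f = 0

end Tau

section TauPairs

/-- A basic τ-rigid pair `(T, P) = (⊕ i, T i, ⊕ j, P j)`, presented through its (pairwise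
nonisomorphic) indecomposable direct summands. -/
structure TauPair where
  /-- the number of indecomposable summands of `T` -/
  k : ℕ
  /-- the number of indecomposable summands of `P` -/
  m : ℕ
  /-- the indecomposable summands of `T` -/
  T : Fin k → Type u
  /-- the indecomposable summands of `P` -/
  P : Fin m → Type u
  [accT : ∀ i, AddCommGroup (T i)]
  [modT : ∀ i, Module A (T i)]
  [accP : ∀ j, AddCommGroup (P j)]
  [modP : ∀ j, Module A (P j)]
  finT : ∀ i, Module.Finite A (T i)
  finP : ∀ j, Module.Finite A (P j)
  indT : ∀ i, IsIndecomposable A (T i)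
  indP : ∀ j, IsIndecomposable A (P j)
  basicT : ∀ i i', Nonempty (T i ≃ₗ[A] T i') → i = i'
  basicP : ∀ j j', Nonempty (P j ≃ₗ[A] P j') → j = j'
  projP : ∀ j, Module.Projective A (P j)
  rigid : IsTauRigid K A (∀ i, T i)
  homPT : ∀ j i, ∀ f : P j →ₗ[A] T i, f = 0

attribute [instance] TauPair.accT TauPair.modT TauPair.accP TauPair.modP

variable {K A}

/-- The underlying module `T = ⊕ i, T i` of a τ-rigid pair. -/
abbrev TauPair.Tmod (q : TauPair K A) : Type u := ∀ i, q.T i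

/-- The underlying projective module `P = ⊕ j, P j` of a τ-rigid pair. -/
abbrev TauPair.Pmod (q : TauPair K A) : Type u := ∀ j, q.P j

variable (K A) in
/-- `|A| = n`: the number of isomorphism classes of indecomposable projective
(equivalently, simple) `A`-modules, i.e. of indecomposable direct summands of `A`. -/
noncomputable def rankA : ℕ := numIndec A A

/-- A τ-rigid pair is τ-tilting if `|T| + |P| = |A|`. -/
def TauPair.IsTauTilting (q : TauPair K A) : Prop := q.k + q.m = rankA A

/-- A τ-rigid pair is almost τ-tilting if `|T| + |P| = |A| - 1`. -/
def TauPair.IsAlmostTauTilting (q : TauPair K A) : Prop := q.k + q.m + 1 = rankA A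

/-- Two basic τ-rigid pairs are equivalent (isomorphic) if their indecomposable summands
match up bijectively, up to isomorphism. -/
def TauPair.Equiv (q q' : TauPair K A) : Prop :=
  ∃ (e : Fin q.k ≃ Fin q'.k) (f : Fin q.m ≃ Fin q'.m),
    (∀ i, Nonempty (q.T i ≃ₗ[A] q'.T (e i))) ∧ ∀ j, Nonempty (q.P j ≃ₗ[A] q'.P (f j))

/-- `ext` is a completion of `q`, i.e. `q` is a direct summand of `ext`. -/
def TauPair.IsCompletion (q ext : TauPair K A) : Prop :=
  ∃ (ι : Fin q.k ↪ Fin ext.k) (κ : Fin q.m ↪ Fin ext.m),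
    (∀ i, Nonempty (q.T i ≃ₗ[A] ext.T (ι i))) ∧ ∀ j, Nonempty (q.P j ≃ₗ[A] ext.P (κ j))

end TauPairs

section GVectors

variable {n : ℕ} (PP : Fin n → Type u) [∀ i, AddCommGroup (PP i)] [∀ i, Module A (PP i)]

/-- `PP : Fin n → Type u` is a complete irredundant list of the indecomposable projective
`A`-modules `P(1), …, P(n)`. -/
def ProjParam : Prop :=
  (∀ i, Module.Projective A (PP i)) ∧ (∀ i, Module.Finite A (PP i)) ∧
    (∀ i, IsIndecomposable A (PP i)) ∧
    (∀ i j, Nonempty (PP i ≃ₗ[A] PP j) → i = j) ∧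
    ∀ (Q : Type u) [AddCommGroup Q] [Module A Q], Module.Finite A Q →
      Module.Projective A Q → IsIndecomposable A Q → ∃ i, Nonempty (Q ≃ₗ[A] PP i)

/-- `g : Fin n → ℤ` is the `g`-vector of `M`: for a minimal projective presentation
`P1 → P0 → M → 0` with `P0 ≅ ⊕ i, P(i)^(a i)` and `P1 ≅ ⊕ i, P(i)^(b i)` one has
`g = a - b`. -/
def IsGVector (M : Type u) [AddCommGroup M] [Module A M] (g : Fin n → ℤ) : Prop :=
  ∃ pres : ProjPres A M, pres.IsMinimal ∧
    ∃ a b : Fin n → ℕ,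
      Nonempty ((∀ i, Fin (a i) → PP i) ≃ₗ[A] pres.P0) ∧
      Nonempty ((∀ i, Fin (b i) → PP i) ≃ₗ[A] pres.P1) ∧
      g = fun i => (a i : ℤ) - (b i : ℤ)

variable {A PP}

/-- The cone `C_{(T,P)}` spanned by the `g`-vectors `g^{T i}` and `-g^{P j}` of the
indecomposable summands of a τ-rigid pair. -/
def cone {k m : ℕ} (gT : Fin k → Fin n → ℤ) (gP : Fin m → Fin n → ℤ) :
    Set (Fin n → ℝ) :=
  { v | ∃ (α : Fin k → ℝ) (β : Fin m → ℝ), (∀ i, 0 ≤ α i) ∧ (∀ j, 0 ≤ β j) ∧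
      v = (∑ i, α i • fun l => (gT i l : ℝ)) - ∑ j, β j • fun l => (gP j l : ℝ) }

/-- The interior cone `C°_{(T,P)}`, where all coefficients are strictly positive. -/
def interiorCone {k m : ℕ} (gT : Fin k → Fin n → ℤ) (gP : Fin m → Fin n → ℤ) :
    Set (Fin n → ℝ) :=
  { v | ∃ (α : Fin k → ℝ) (β : Fin m → ℝ), (∀ i, 0 < α i) ∧ (∀ j, 0 < β j) ∧
      v = (∑ i, α i • fun l => (gT i l : ℝ)) - ∑ j, β j • fun l => (gP j l : ℝ) }

end GVectors

end WCS
namespace WCS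

variable (K : Type u) [Field K] (A : Type u) [Ring A] [Algebra K A] [FiniteDimensional K A]

/-!
Filtrations are handled as `RelSeries` of the relation "`p ≤ q` and `q / p ∈ Fac M`" on
submodules. Pushing such a series forward along a surjection shows that `Filt (Fac M)` is closed
under quotients (and isomorphisms); an extension `0 → X → Y → Z → 0` is filtered by the image of a
filtration of `X` followed by the preimage of one of `Z`. Conversely a torsion class containing
`M` contains every `M^k`, hence `Fac M`, and then, by induction on the length of a filtration,
`Filt (Fac M)`.
-/

section FiltFac

variable {A}
variable {M X Y Z : Type u} [AddCommGroup M] [Module A M] [AddCommGroup X] [Module A X]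
  [AddCommGroup Y] [Module A Y] [AddCommGroup Z] [Module A Z]

theorem InFac.of_surjective (h : InFac A M X) (π : X →ₗ[A] Y) (hπ : Function.Surjective π) :
    InFac A M Y :=
  let ⟨k, f, hf⟩ := h
  ⟨k, π ∘ₗ f, hπ.comp hf⟩

theorem InFac.of_linearEquiv (h : InFac A M X) (e : X ≃ₗ[A] Y) : InFac A M Y :=
  h.of_surjective e.toLinearMap e.surjective

theorem InFac.quotient_of_surjective {P : Submodule A X} {Q : Submodule A Y}
    (h : InFac A M (X ⧸ P)) (g : X →ₗ[A] Y) (hg : Function.Surjective g)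
    (hPQ : P ≤ Q.comap g) : InFac A M (Y ⧸ Q) := by
  refine h.of_surjective (P.mapQ Q g hPQ) fun y => ?_
  obtain ⟨y, rfl⟩ := Q.mkQ_surjective y
  obtain ⟨x, rfl⟩ := hg y
  exact ⟨P.mkQ x, rfl⟩

theorem InFac.quotient_of_ker_eq (h : InFac A M Y) (ψ : X →ₗ[A] Y) (hψ : Function.Surjective ψ)
    {P : Submodule A X} (hP : LinearMap.ker ψ = P) : InFac A M (X ⧸ P) := by
  subst hP
  exact h.of_linearEquiv (ψ.quotKerEquivOfSurjective hψ).symm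

variable (A M X) in
def facStep : SetRel (Submodule A X) (Submodule A X) :=
  {pq | pq.1 ≤ pq.2 ∧ InFac A M (↥pq.2 ⧸ pq.1.comap pq.2.subtype)}

theorem inFiltFac_iff_exists_relSeries :
    InFiltFac A M X ↔ ∃ p : RelSeries (facStep A M X), p.head = ⊥ ∧ p.last = ⊤ :=
  ⟨fun ⟨t, s, h0, ht, hle, hs⟩ => ⟨⟨t, s, fun j => ⟨hle j, hs j⟩⟩, h0, ht⟩,
    fun ⟨p, h0, ht⟩ => ⟨p.length, p, h0, ht, fun j => (p.step j).1, fun j => (p.step j).2⟩⟩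

theorem inFac_of_bot_facStep {L : Submodule A X} (h : (⊥, L) ∈ facStep A M X) :
    InFac A M L :=
  h.2.of_linearEquiv (Submodule.quotEquivOfEqBot _ (by simp))

variable (M) in
/-- `f q / f p` is a quotient of `q / p`. -/
def facStepMap (f : X →ₗ[A] Y) : (facStep A M X).Hom (facStep A M Y) where
  toFun p := p.map f
  map_rel' {_ q} h := ⟨Submodule.map_mono h.1,
    h.2.quotient_of_surjective (f.submoduleMap q) (f.submoduleMap_surjective q)
      fun _ hx => Submodule.mem_map_of_mem hx⟩

@[simp]
theorem facStepMap_apply (f : X →ₗ[A] Y) (p : Submodule A X) :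
    facStepMap M f p = p.map f :=
  rfl

variable (M) in
/-- `g⁻¹ q / g⁻¹ p ≅ q / p` because `g` is surjective. -/
def facStepComap (g : Y →ₗ[A] Z) (hg : Function.Surjective g) :
    (facStep A M Z).Hom (facStep A M Y) where
  toFun p := p.comap g
  map_rel' {p q} h := by
    refine ⟨Submodule.comap_mono h.1, h.2.quotient_of_ker_eq
      ((p.comap q.subtype).mkQ ∘ₗ g.restrict fun _ hx => hx) ?_ ?_⟩
    · refine (Submodule.mkQ_surjective _).comp fun ⟨z, hz⟩ => ?_
      obtain ⟨y, rfl⟩ := hg z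
      exact ⟨⟨y, hz⟩, rfl⟩
    · ext x
      simp

@[simp]
theorem facStepComap_apply (g : Y →ₗ[A] Z) (hg : Function.Surjective g) (p : Submodule A Z) :
    facStepComap M g hg p = p.comap g :=
  rfl

theorem InFiltFac.of_surjective (h : InFiltFac A M X) (π : X →ₗ[A] Y)
    (hπ : Function.Surjective π) : InFiltFac A M Y := by
  obtain ⟨p, h0, ht⟩ := inFiltFac_iff_exists_relSeries.1 h
  refine inFiltFac_iff_exists_relSeries.2 ⟨p.map (facStepMap M π), ?_, ?_⟩
  · simp [h0]
  · simp [ht, LinearMap.range_eq_top.2 hπ]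

theorem InFiltFac.of_exact (hX : InFiltFac A M X) (hZ : InFiltFac A M Z) (f : X →ₗ[A] Y)
    (g : Y →ₗ[A] Z) (hg : Function.Surjective g) (hfg : LinearMap.range f = LinearMap.ker g) :
    InFiltFac A M Y := by
  obtain ⟨p, hp0, hpt⟩ := inFiltFac_iff_exists_relSeries.1 hX
  obtain ⟨q, hq0, hqt⟩ := inFiltFac_iff_exists_relSeries.1 hZ
  have hconnect : (p.map (facStepMap M f)).last = (q.map (facStepComap M g hg)).head := by
    simp [hpt, hq0, hfg]
  refine inFiltFac_iff_exists_relSeries.2 ⟨RelSeries.smash _ _ hconnect, ?_, ?_⟩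
  · simp [hp0]
  · simp [hqt]

end FiltFac

namespace IsTorsionClass

variable {A} {𝒯 : ModuleCat.{u} A → Prop} (h𝒯 : IsTorsionClass A 𝒯)
include h𝒯

theorem of_linearEquiv {X Y : Type u} [AddCommGroup X] [Module A X] [AddCommGroup Y]
    [Module A Y] (e : X ≃ₗ[A] Y) (hX : 𝒯 (ModuleCat.of A X)) : 𝒯 (ModuleCat.of A Y) :=
  h𝒯.2.1 _ _ ⟨e⟩ hX

theorem of_subsingleton {M : ModuleCat.{u} A} (hM : 𝒯 M) (N : Type u) [AddCommGroup N]
    [Module A N] [Subsingleton N] : 𝒯 (ModuleCat.of A N) :=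
  h𝒯.of_linearEquiv (LinearEquiv.ofSubsingleton _ _) (h𝒯.2.2.1 M hM ⊤)

theorem of_submodule {N : Type u} [AddCommGroup N] [Module A N] [Module.Finite A N]
    (L : Submodule A N) (hL : 𝒯 (ModuleCat.of A L)) (hNL : 𝒯 (ModuleCat.of A (N ⧸ L))) :
    𝒯 (ModuleCat.of A N) :=
  h𝒯.2.2.2 (.of A L) (.of A N) (.of A (N ⧸ L)) L.subtype L.mkQ ‹_› L.injective_subtype
    L.mkQ_surjective (by rw [L.range_subtype, L.ker_mkQ]) hL hNL

theorem prod {X Z : Type u} [AddCommGroup X] [Module A X] [AddCommGroup Z] [Module A Z]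
    (hX : 𝒯 (ModuleCat.of A X)) (hZ : 𝒯 (ModuleCat.of A Z)) : 𝒯 (ModuleCat.of A (X × Z)) :=
  have := h𝒯.1 _ hX
  have := h𝒯.1 _ hZ
  h𝒯.2.2.2 (.of A X) (.of A (X × Z)) (.of A Z) (LinearMap.inl A X Z) (LinearMap.snd A X Z)
    inferInstance LinearMap.inl_injective LinearMap.snd_surjective (LinearMap.range_inl A X Z)
    hX hZ

theorem pi_fin {M : Type u} [AddCommGroup M] [Module A M] (hM : 𝒯 (ModuleCat.of A M))
    (k : ℕ) : 𝒯 (ModuleCat.of A (Fin k → M)) := by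
  induction k with
  | zero => exact h𝒯.of_subsingleton hM _
  | succ k ih => exact h𝒯.of_linearEquiv (Fin.consLinearEquiv A fun _ => M) (h𝒯.prod hM ih)

theorem of_inFac {M N : Type u} [AddCommGroup M] [Module A M] [AddCommGroup N] [Module A N]
    (hM : 𝒯 (ModuleCat.of A M)) (hN : InFac A M N) : 𝒯 (ModuleCat.of A N) :=
  let ⟨k, f, hf⟩ := hN
  h𝒯.of_linearEquiv (f.quotKerEquivOfSurjective hf) (h𝒯.2.2.1 _ (h𝒯.pi_fin hM k) _)

/-- `p 1` lies in `Fac M`, and the tail of `p` filters `N ⧸ p 1`. -/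
theorem of_relSeries {M : Type u} [AddCommGroup M] [Module A M] (hM : 𝒯 (ModuleCat.of A M))
    {N : Type u} [AddCommGroup N] [Module A N] [Module.Finite A N]
    (p : RelSeries (facStep A M N)) (h0 : p.head = ⊥) (ht : p.last = ⊤) :
    𝒯 (ModuleCat.of A N) := by
  induction hn : p.length generalizing N with
  | zero =>
    have hbt : (⊥ : Submodule A N) = ⊤ := h0 ▸ ht ▸ congr_arg p (Fin.ext (by simp [hn]))
    have := (Submodule.subsingleton_iff A).1 (subsingleton_iff_bot_eq_top.1 hbt)
    exact h𝒯.of_subsingleton hM N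
  | succ n ih =>
    have hne : p.length ≠ 0 := by omega
    have hone : (1 : Fin (p.length + 1)) = Fin.succ ⟨0, by omega⟩ :=
      Fin.ext (Nat.mod_eq_of_lt (by omega : 1 < p.length + 1))
    have hstep : (⊥, p 1) ∈ facStep A M N := by
      rw [hone, ← h0]
      exact p.step ⟨0, by omega⟩
    refine h𝒯.of_submodule (p 1) (h𝒯.of_inFac hM (inFac_of_bot_facStep hstep)) ?_
    refine ih ((p.tail hne).map (facStepMap M (p 1).mkQ)) ?_ ?_ ?_
    · simp [Submodule.mkQ_map_self]
    · simp [ht]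
    · simp [hn]

theorem of_inFiltFac {M N : Type u} [AddCommGroup M] [Module A M] [AddCommGroup N] [Module A N]
    [Module.Finite A N] (hM : 𝒯 (ModuleCat.of A M)) (hN : InFiltFac A M N) :
    𝒯 (ModuleCat.of A N) :=
  let ⟨p, h0, ht⟩ := inFiltFac_iff_exists_relSeries.1 hN
  h𝒯.of_relSeries hM p h0 ht

end IsTorsionClass

theorem filt_fac_minimal_torsion_class
    (M : Type u) [AddCommGroup M] [Module A M] :
    IsTorsionClass A (fun N : ModuleCat.{u} A => Module.Finite A N ∧ InFiltFac A M N) ∧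
    ∀ 𝒯 : ModuleCat.{u} A → Prop, IsTorsionClass A 𝒯 → 𝒯 (ModuleCat.of A M) →
      ∀ N : ModuleCat.{u} A, Module.Finite A N → InFiltFac A M N → 𝒯 N := by
  refine ⟨⟨fun _ h => h.1, ?_, ?_, ?_⟩, fun 𝒯 h𝒯 hM N _ hN => h𝒯.of_inFiltFac hM hN⟩
  · rintro X Y ⟨e⟩ ⟨_, hX⟩
    exact ⟨.equiv e, hX.of_surjective e.toLinearMap e.surjective⟩
  · rintro N ⟨_, hN⟩ P
    exact ⟨inferInstance, hN.of_surjective P.mkQ P.mkQ_surjective⟩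
  · rintro X Y Z f g hY - hg hfg ⟨-, hX⟩ ⟨-, hZ⟩
    exact ⟨hY, hX.of_exact hZ f g hg hfg⟩

end WCS
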